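/- Let X and Y be complex topological vector spaces, Γ a set of continuous linear operators on X, and Γ₁ a set of continuous linear operators on Y. Suppose Γ and Γ₁ are quasi-similar, i.e., there is a continuous linear operator φ : X → Y with dense range such that for every T ∈ Γ there exists S ∈ Γ₁ with S ∘ φ = φ ∘ T. If Γ is diskcyclic in X, then Γ₁ is diskcyclic in Y; moreover, for every diskcyclic vector x of Γ, φ(x) is a diskcyclic vector of Γ₁ (so φ(𝔻C(Γ)) ⊆ 𝔻C(Γ₁)). -/

import Mathlib

section DiskOrbit

variable {𝕜 X Y : Type*} [NormedField 𝕜]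
  [AddCommMonoid X] [Module 𝕜 X] [TopologicalSpace X]
  [AddCommMonoid Y] [Module 𝕜 Y] [TopologicalSpace Y]

def diskOrbit (Γ : Set (X →L[𝕜] X)) (x : X) : Set X :=
  {y | ∃ α : 𝕜, ‖α‖ ≤ 1 ∧ ∃ T ∈ Γ, y = α • T x}

theorem image_diskOrbit_subset {Γ : Set (X →L[𝕜] X)} {Γ₁ : Set (Y →L[𝕜] Y)} {φ : X →L[𝕜] Y}
    (hsim : ∀ T ∈ Γ, ∃ S ∈ Γ₁, S ∘L φ = φ ∘L T) (x : X) :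
    φ '' diskOrbit Γ x ⊆ diskOrbit Γ₁ (φ x) := by
  rintro _ ⟨_, ⟨α, hα, T, hT, rfl⟩, rfl⟩
  obtain ⟨S, hS, hST⟩ := hsim T hT
  refine ⟨α, hα, S, hS, ?_⟩
  rw [map_smul, ← ContinuousLinearMap.comp_apply, ← hST, ContinuousLinearMap.comp_apply]

theorem Dense.diskOrbit_of_denseRange {Γ : Set (X →L[𝕜] X)} {Γ₁ : Set (Y →L[𝕜] Y)}
    {φ : X →L[𝕜] Y} (hφ : DenseRange φ) (hsim : ∀ T ∈ Γ, ∃ S ∈ Γ₁, S ∘L φ = φ ∘L T)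
    {x : X} (hx : Dense (diskOrbit Γ x)) : Dense (diskOrbit Γ₁ (φ x)) :=
  (hφ.dense_image φ.continuous hx).mono (image_diskOrbit_subset hsim x)

end DiskOrbit

theorem stmt_2_general {X Y : Type*}
    [AddCommGroup X] [Module ℂ X] [TopologicalSpace X]
    [AddCommGroup Y] [Module ℂ Y] [TopologicalSpace Y]
    (Γ : Set (X →L[ℂ] X)) (Γ₁ : Set (Y →L[ℂ] Y)) (φ : X →L[ℂ] Y) (hφ : DenseRange ⇑φ)
    (hsim : ∀ T ∈ Γ, ∃ S ∈ Γ₁, S ∘L φ = φ ∘L T) :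
    (∀ x : X, Dense {y : X | ∃ α : ℂ, ‖α‖ ≤ 1 ∧ ∃ T ∈ Γ, y = α • T x} →
      Dense {y : Y | ∃ α : ℂ, ‖α‖ ≤ 1 ∧ ∃ S ∈ Γ₁, y = α • S (φ x)}) ∧
    ((∃ x : X, Dense {y : X | ∃ α : ℂ, ‖α‖ ≤ 1 ∧ ∃ T ∈ Γ, y = α • T x}) →
      ∃ y₀ : Y, Dense {y : Y | ∃ α : ℂ, ‖α‖ ≤ 1 ∧ ∃ S ∈ Γ₁, y = α • S y₀}) :=
  ⟨fun _ hx => hx.diskOrbit_of_denseRange hφ hsim,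
    fun ⟨x, hx⟩ => ⟨φ x, hx.diskOrbit_of_denseRange hφ hsim⟩⟩

/-- Diskcyclicity is preserved under quasi-similarity: if `φ : X → Y` is a continuous
linear operator with dense range intertwining `Γ` with `Γ₁`, then `φ` maps diskcyclic
vectors of `Γ` to diskcyclic vectors of `Γ₁`; in particular if `Γ` is diskcyclic then
so is `Γ₁`. -/
theorem stmt_2 {X Y : Type*}
    [AddCommGroup X] [Module ℂ X] [TopologicalSpace X] [IsTopologicalAddGroup X]
    [ContinuousSMul ℂ X]
    [AddCommGroup Y] [Module ℂ Y] [TopologicalSpace Y] [IsTopologicalAddGroup Y]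
    [ContinuousSMul ℂ Y]
    (Γ : Set (X →L[ℂ] X)) (Γ₁ : Set (Y →L[ℂ] Y)) (φ : X →L[ℂ] Y) (hφ : DenseRange ⇑φ)
    (hsim : ∀ T ∈ Γ, ∃ S ∈ Γ₁, S ∘L φ = φ ∘L T) :
    (∀ x : X, Dense {y : X | ∃ α : ℂ, ‖α‖ ≤ 1 ∧ ∃ T ∈ Γ, y = α • T x} →
      Dense {y : Y | ∃ α : ℂ, ‖α‖ ≤ 1 ∧ ∃ S ∈ Γ₁, y = α • S (φ x)}) ∧
    ((∃ x : X, Dense {y : X | ∃ α : ℂ, ‖α‖ ≤ 1 ∧ ∃ T ∈ Γ, y = α • T x}) →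
      ∃ y₀ : Y, Dense {y : Y | ∃ α : ℂ, ‖α‖ ≤ 1 ∧ ∃ S ∈ Γ₁, y = α • S y₀}) :=
  stmt_2_general Γ Γ₁ φ hφ hsim
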